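/- arXiv:math/0209268 — 2 statements merged into one kernel-verified Lean document; each statement's English description precedes it below -/
import Mathlib

section
/- The operators ρP, ρT satisfy the relations ρT ∘ ρT* = −q⁴ ρP² + ρP and ρT* ∘ ρT = q⁻⁴ (ρP − ρP²), where * denotes the Hilbert-space adjoint. -/
/-!
`ρT` is a weighted backward shift `e (k + 1) ↦ w k • e k`, so its adjoint is the forward shift
`e k ↦ conj (w k) • e (k + 1)`. Hence `ρT ρT*` and `ρT* ρT` are diagonal in the basis, with
entries `‖w k‖²` at `e k` and at `e (k + 1)` respectively. With `w k = q^{2k} √(1 - q^{4k+4})` we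
get `‖w k‖² = q^{4k} - q⁴ q^{8k}`, which is the `k`-th entry of `ρP - q⁴ ρP²` and the `(k+1)`-st
entry of `q⁻⁴ (ρP - ρP²)`.
-/

open ContinuousLinearMap

namespace HilbertBasis

variable {ι 𝕜 H : Type*} [RCLike 𝕜] [NormedAddCommGroup H] [InnerProductSpace 𝕜 H]

theorem ext_of_inner_eq (e : HilbertBasis ι 𝕜 H) {x y : H}
    (h : ∀ i, inner 𝕜 (e i) x = inner 𝕜 (e i) y) : x = y :=
  e.repr.injective <| lp.ext <| funext fun i => by
    rw [e.repr_apply_apply, e.repr_apply_apply, h]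

theorem ext_continuousLinearMap {F : Type*} [NormedAddCommGroup F] [NormedSpace 𝕜 F]
    (e : HilbertBasis ι 𝕜 H) {S T : H →L[𝕜] F} (h : ∀ i, S (e i) = T (e i)) : S = T :=
  ext_on (Submodule.dense_iff_topologicalClosure_eq_top.mpr e.dense_span) <| by
    rintro _ ⟨i, rfl⟩
    exact h i

variable [CompleteSpace H] (e : HilbertBasis ℕ 𝕜 H) {T : H →L[𝕜] H} {w : ℕ → 𝕜}

theorem adjoint_apply_of_weighted_shift (hT0 : T (e 0) = 0)
    (hT : ∀ k, T (e (k + 1)) = w k • e k) (k : ℕ) :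
    adjoint T (e k) = starRingEnd 𝕜 (w k) • e (k + 1) := by
  have horth := orthonormal_iff_ite.mp e.orthonormal
  refine e.ext_of_inner_eq fun j => ?_
  rw [adjoint_inner_right, inner_smul_right, horth]
  cases j with
  | zero => simp [hT0]
  | succ j =>
    rw [hT j, inner_smul_left, horth]
    by_cases hjk : j = k <;> simp [hjk]

theorem mul_adjoint_apply_of_weighted_shift (hT0 : T (e 0) = 0)
    (hT : ∀ k, T (e (k + 1)) = w k • e k) (k : ℕ) :
    (T * adjoint T) (e k) = ((‖w k‖ ^ 2 : ℝ) : 𝕜) • e k := by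
  rw [mul_apply_eq_comp, e.adjoint_apply_of_weighted_shift hT0 hT, map_smul, hT, smul_smul,
    RCLike.conj_mul, RCLike.ofReal_pow]

theorem adjoint_mul_apply_succ_of_weighted_shift (hT0 : T (e 0) = 0)
    (hT : ∀ k, T (e (k + 1)) = w k • e k) (k : ℕ) :
    (adjoint T * T) (e (k + 1)) = ((‖w k‖ ^ 2 : ℝ) : 𝕜) • e (k + 1) := by
  rw [mul_apply_eq_comp, hT, map_smul, e.adjoint_apply_of_weighted_shift hT0 hT, smul_smul,
    mul_comm, RCLike.conj_mul, RCLike.ofReal_pow]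

end HilbertBasis

theorem sq_pow_mul_sqrt_one_sub_pow {q : ℝ} (hq0 : 0 ≤ q) (hq1 : q ≤ 1) (k : ℕ) :
    (q ^ (2 * k) * √(1 - q ^ (4 * (k + 1)))) ^ 2 = q ^ (4 * k) - q ^ 4 * (q ^ (4 * k)) ^ 2 := by
  rw [mul_pow, Real.sq_sqrt (sub_nonneg.mpr (pow_le_one₀ hq0 hq1))]
  ring

open ContinuousLinearMap in
theorem stmt3_general {H : Type*} [NormedAddCommGroup H] [InnerProductSpace ℂ H] [CompleteSpace H]
    (e : HilbertBasis ℕ ℂ H) (q : ℝ) (hq0 : 0 < q) (hq1 : q < 1)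
    (ρP ρT : H →L[ℂ] H)
    (hP : ∀ k : ℕ, ρP (e k) = ((q ^ (4 * k) : ℝ) : ℂ) • e k)
    (hT0 : ρT (e 0) = 0)
    (hT : ∀ k : ℕ, ρT (e (k + 1)) =
      ((q ^ (2 * k) * Real.sqrt (1 - q ^ (4 * (k + 1))) : ℝ) : ℂ) • e k) :
    ρT * adjoint ρT = -((q : ℂ) ^ 4) • ρP ^ 2 + ρP ∧
    adjoint ρT * ρT = (((q : ℂ) ^ 4)⁻¹) • (ρP - ρP ^ 2) := by
  have hw : ∀ k : ℕ, ‖((q ^ (2 * k) * √(1 - q ^ (4 * (k + 1))) : ℝ) : ℂ)‖ ^ 2 =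
      q ^ (4 * k) - q ^ 4 * (q ^ (4 * k)) ^ 2 := fun k => by
    rw [Complex.norm_real, Real.norm_eq_abs, sq_abs, sq_pow_mul_sqrt_one_sub_pow hq0.le hq1.le]
  have hP2 : ∀ k : ℕ, (ρP ^ 2) (e k) = ((q ^ (4 * k) : ℝ) : ℂ) ^ 2 • e k := fun k => by
    rw [sq, mul_apply_eq_comp, hP, map_smul, hP, smul_smul, sq]
  have hq : (q : ℂ) ≠ 0 := Complex.ofReal_ne_zero.mpr hq0.ne'
  refine ⟨e.ext_continuousLinearMap fun k => ?_, e.ext_continuousLinearMap fun k => ?_⟩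
  · rw [e.mul_adjoint_apply_of_weighted_shift hT0 hT, hw, add_apply, smul_apply, hP2, hP,
      RCLike.ofReal_eq_complex_ofReal]
    match_scalars
    ring
  · cases k with
    | zero => simp [mul_apply_eq_comp, hT0, hP2, hP]
    | succ k =>
      rw [e.adjoint_mul_apply_succ_of_weighted_shift hT0 hT, hw, smul_apply, sub_apply, hP2, hP,
        RCLike.ofReal_eq_complex_ofReal]
      match_scalars
      field_simp
      ring

open ContinuousLinearMap in
/-- The operators `ρP, ρT` on `ℓ²(ℕ)` satisfy
`ρT ρT* = -q⁴ ρP² + ρP` and `ρT* ρT = q⁻⁴ (ρP - ρP²)`. -/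
theorem stmt3 {H : Type*} [NormedAddCommGroup H] [InnerProductSpace ℂ H] [CompleteSpace H]
    (e : HilbertBasis ℕ ℂ H) (q : ℝ) (hq0 : 0 < q) (hq1 : q < 1)
    (ρP ρT ρR : H →L[ℂ] H)
    (hP : ∀ k : ℕ, ρP (e k) = ((q ^ (4 * k) : ℝ) : ℂ) • e k)
    (hT0 : ρT (e 0) = 0)
    (hT : ∀ k : ℕ, ρT (e (k + 1)) =
      ((q ^ (2 * k) * Real.sqrt (1 - q ^ (4 * (k + 1))) : ℝ) : ℂ) • e k)
    (hR0 : ρR (e 0) = 0) (hR1 : ρR (e 1) = 0)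
    (hR : ∀ k : ℕ, ρR (e (k + 2)) =
      ((Real.sqrt ((1 - q ^ (4 * (k + 2))) * (1 - q ^ (4 * (k + 1)))) : ℝ) : ℂ) • e k) :
    ρT * adjoint ρT = -((q : ℂ) ^ 4) • ρP ^ 2 + ρP ∧
    adjoint ρT * ρT = (((q : ℂ) ^ 4)⁻¹) • (ρP - ρP ^ 2) :=
  stmt3_general e q hq0 hq1 ρP ρT hP hT0 hT
end

section
/- Let q be a real number with 0 < q < 1, let H = ℓ²(ℕ) with standard orthonormal basis (e_k)_{k∈ℕ}, and for each sign ε ∈ {+1,−1} define bounded operators K_ε and L on H by K_ε e_k = ε·q^{2k} e_k and L e_k = √(1−q^{4k}) e_{k−1} (the coefficient vanishes for k = 0). Then K_ε is self-adjoint and the relations L ∘ K_ε = q² K_ε ∘ L, L* ∘ L + K_ε² = 1, and L ∘ L* + q⁴ K_ε² = 1 hold; that is, K_ε and L define the two irreducible infinite-dimensional *-representations π_± of the coordinate *-algebra O(S²_{q,1}) of the equator Podleś quantum sphere. -/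
/-!
Everything is checked on the basis `e k`. `K` is diagonal with real eigenvalues, hence
self-adjoint; the adjoint of the weighted backward shift `L e_{k+1} = c_k e_k` is the weighted
forward shift `e_k ↦ c_k e_{k+1}`. Each relation then reduces to an identity between the weights
`c_k = √(1 - q^{4(k+1)})` and `d_k = ε q^{2k}`, such as `c_k² + d_{k+1}² = 1`, which holds because
`ε² = 1`.
-/

open ContinuousLinearMap

namespace HilbertBasis

variable {ι 𝕜 E : Type*} [RCLike 𝕜] [NormedAddCommGroup E] [InnerProductSpace 𝕜 E]
  (b : HilbertBasis ι 𝕜 E)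

theorem ext_inner {x y : E} (h : ∀ i, inner 𝕜 (b i) x = inner 𝕜 (b i) y) : x = y :=
  b.repr.injective <| lp.ext <| funext fun i => by simpa only [b.repr_apply_apply] using h i

theorem ext_clm {F : Type*} [TopologicalSpace F] [AddCommMonoid F] [Module 𝕜 F] [T2Space F]
    {A B : E →L[𝕜] F} (h : ∀ i, A (b i) = B (b i)) : A = B :=
  ext_on ((Submodule.dense_iff_topologicalClosure_eq_top).2 b.dense_span) <| by
    rintro _ ⟨i, rfl⟩
    exact h i

theorem inner_eq_ite [DecidableEq ι] (i j : ι) :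
    inner 𝕜 (b i) (b j) = if i = j then 1 else 0 :=
  orthonormal_iff_ite.1 b.orthonormal i j

theorem adjoint_apply_eq_of_inner {F : Type*} [NormedAddCommGroup F] [InnerProductSpace 𝕜 F]
    [CompleteSpace E] [CompleteSpace F] (A : E →L[𝕜] F) {x : E} {y : F}
    (h : ∀ i, inner 𝕜 (A (b i)) y = inner 𝕜 (b i) x) : adjoint A y = x :=
  b.ext_inner fun i => by rw [adjoint_inner_right, h]

end HilbertBasis

section WeightedShift

variable {H : Type*} [NormedAddCommGroup H] [InnerProductSpace ℂ H]
  (e : HilbertBasis ℕ ℂ H) {K L : H →L[ℂ] H} {d c : ℕ → ℝ}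

theorem isSelfAdjoint_of_apply_basis_eq_smul [CompleteSpace H]
    (hK : ∀ k, K (e k) = (d k : ℂ) • e k) : IsSelfAdjoint K := by
  classical
  refine isSelfAdjoint_iff'.2 <| e.ext_clm fun k => e.adjoint_apply_eq_of_inner K fun i => ?_
  rw [hK, hK, inner_smul_left, inner_smul_right, e.inner_eq_ite, Complex.conj_ofReal]
  split_ifs with h
  · rw [h]
  · simp

theorem adjoint_apply_basis_of_shift [CompleteSpace H] (hL0 : L (e 0) = 0)
    (hL : ∀ k, L (e (k + 1)) = (c k : ℂ) • e k) (k : ℕ) :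
    adjoint L (e k) = (c k : ℂ) • e (k + 1) := by
  classical
  refine e.adjoint_apply_eq_of_inner L fun i => ?_
  cases i with
  | zero =>
    rw [hL0, inner_zero_left, inner_smul_right, e.inner_eq_ite, if_neg (Nat.succ_ne_zero k).symm,
      mul_zero]
  | succ m =>
    rw [hL, inner_smul_left, inner_smul_right, e.inner_eq_ite, e.inner_eq_ite,
      Complex.conj_ofReal]
    by_cases h : m = k <;> simp [h]

theorem shift_mul_diagonal_eq_smul (hK : ∀ k, K (e k) = (d k : ℂ) • e k) (hL0 : L (e 0) = 0)
    (hL : ∀ k, L (e (k + 1)) = (c k : ℂ) • e k) (s : ℂ) (hd : ∀ k, (d (k + 1) : ℂ) = s * d k) :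
    L * K = s • (K * L) := by
  refine e.ext_clm fun k => ?_
  cases k with
  | zero => simp [hK, hL0]
  | succ k =>
    simp only [mul_apply_eq_comp, smul_apply, hK, hL, map_smul, smul_smul, hd]
    ring_nf

theorem adjoint_shift_mul_add_sq_eq_one [CompleteSpace H] (hK : ∀ k, K (e k) = (d k : ℂ) • e k)
    (hL0 : L (e 0) = 0) (hL : ∀ k, L (e (k + 1)) = (c k : ℂ) • e k) (h0 : d 0 ^ 2 = 1)
    (h : ∀ k, c k ^ 2 + d (k + 1) ^ 2 = 1) : adjoint L * L + K ^ 2 = 1 := by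
  refine e.ext_clm fun k => ?_
  cases k with
  | zero =>
    simp only [add_apply, mul_apply_eq_comp, sq K, hL0, hK, map_zero, map_smul, smul_smul,
      zero_add, one_apply_eq_self]
    convert one_smul ℂ (e 0) using 2
    exact_mod_cast (sq (d 0)).symm.trans h0
  | succ k =>
    simp only [add_apply, mul_apply_eq_comp, sq K, hL, hK, map_smul,
      adjoint_apply_basis_of_shift e hL0 hL, smul_smul, ← add_smul, one_apply_eq_self]
    convert one_smul ℂ (e (k + 1)) using 2
    exact_mod_cast (by linear_combination h k : c k * c k + d (k + 1) * d (k + 1) = 1)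

theorem shift_mul_adjoint_add_smul_sq_eq_one [CompleteSpace H]
    (hK : ∀ k, K (e k) = (d k : ℂ) • e k) (hL0 : L (e 0) = 0)
    (hL : ∀ k, L (e (k + 1)) = (c k : ℂ) • e k) (s : ℂ)
    (h : ∀ k, (c k : ℂ) ^ 2 + s * d k ^ 2 = 1) : L * adjoint L + s • K ^ 2 = 1 := by
  refine e.ext_clm fun k => ?_
  simp only [add_apply, mul_apply_eq_comp, smul_apply, sq K, hL, hK, map_smul,
    adjoint_apply_basis_of_shift e hL0 hL, smul_smul, ← add_smul, one_apply_eq_self]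
  convert one_smul ℂ (e k) using 2
  linear_combination h k

end WeightedShift

open ContinuousLinearMap in
/-- For `0 < q < 1`, a sign `ε ∈ {+1, -1}` and the bounded operators on
`ℓ²(ℕ)` given by `K_ε e_k = ε q^{2k} e_k` and `L e_k = √(1-q^{4k}) e_{k-1}` (vanishing for
`k = 0`), the operator `K_ε` is self-adjoint and `L K_ε = q² K_ε L`, `L* L + K_ε² = 1`,
`L L* + q⁴ K_ε² = 1`; i.e. they define the irreducible infinite-dimensional
`*`-representations `π_±` of `O(S²_{q,1})`. -/
theorem stmt11 {H : Type*} [NormedAddCommGroup H] [InnerProductSpace ℂ H] [CompleteSpace H]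
    (e : HilbertBasis ℕ ℂ H) (q ε : ℝ) (hq0 : 0 < q) (hq1 : q < 1)
    (hε : ε = 1 ∨ ε = -1)
    (K L : H →L[ℂ] H)
    (hK : ∀ k : ℕ, K (e k) = ((ε * q ^ (2 * k) : ℝ) : ℂ) • e k)
    (hL0 : L (e 0) = 0)
    (hL : ∀ k : ℕ, L (e (k + 1)) = ((Real.sqrt (1 - q ^ (4 * (k + 1))) : ℝ) : ℂ) • e k) :
    IsSelfAdjoint K ∧
    L * K = ((q : ℂ) ^ 2) • (K * L) ∧
    adjoint L * L + K ^ 2 = 1 ∧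
    L * adjoint L + ((q : ℂ) ^ 4) • K ^ 2 = 1 := by
  have hε2 : ε ^ 2 = 1 := by rcases hε with rfl | rfl <;> norm_num
  have hc (k : ℕ) : Real.sqrt (1 - q ^ (4 * (k + 1))) ^ 2 = 1 - q ^ (4 * (k + 1)) :=
    Real.sq_sqrt <| sub_nonneg.2 <| pow_le_one₀ hq0.le hq1.le
  refine ⟨isSelfAdjoint_of_apply_basis_eq_smul e hK,
    shift_mul_diagonal_eq_smul e hK hL0 hL _ fun k => ?_,
    adjoint_shift_mul_add_sq_eq_one e hK hL0 hL ?_ fun k => ?_,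
    shift_mul_adjoint_add_smul_sq_eq_one e hK hL0 hL _ fun k => ?_⟩
  · push_cast
    ring
  · simpa using hε2
  · rw [hc, mul_pow, hε2, ← pow_mul]
    ring_nf
  · have hreal : Real.sqrt (1 - q ^ (4 * (k + 1))) ^ 2 + q ^ 4 * (ε * q ^ (2 * k)) ^ 2 = 1 := by
      rw [hc, mul_pow, hε2, ← pow_mul]
      ring
    exact_mod_cast hreal
end
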